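/- Consider a dynamics on 2b+1 honest states x : ℕ → Fin (2b+1) → ℝ in which, at each step t, each honest state x(t+1)(i) is the trimmed mean of some family of 3b+1 real values that contains all 2b+1 honest values x(t)(0), …, x(t)(2b) (with the remaining b values arbitrary, possibly depending on i and t). Then the honest interval is nested over time: for all t, min_i x(t+1)(i) ≥ min_i x(t)(i) and max_i x(t+1)(i) ≤ max_i x(t)(i); consequently, every honest state at every time t lies in the convex hull [min_i x(0)(i), max_i x(0)(i)] of the initial honest states. -/

import Mathlib

/-- The trimmed mean of `3b+1` real values with trimming parameter `b`:
sort the values in nondecreasing order, discard the smallest `b` and the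
largest `b` values, and take the arithmetic mean of the remaining `b+1`
values. -/
noncomputable def trimmedMean (b : ℕ) (v : Fin (3 * b + 1) → ℝ) : ℝ :=
  (∑ k ∈ Finset.univ.filter (fun k : Fin (3 * b + 1) => b ≤ k.val ∧ k.val ≤ 2 * b),
      (v ∘ Tuple.sort v) k) / (b + 1)

/-! The honest values are `2b+1` of the `3b+1` inputs and all lie in `[m, M]`, the hull of the
honest states, so at most `b` inputs fall below `m` and at most `b` above `M`. The order
statistics of ranks `b, …, 2b` therefore lie in `[m, M]`, hence so does their mean. Every new
honest state thus lies in the current honest hull, and the hulls are nested. -/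

open Finset
open scoped BigOperators

namespace Tuple

variable {n : ℕ} {α : Type*} [LinearOrder α] {v : Fin n → α}

lemma card_filter_apply_sort (p : α → Prop) [DecidablePred p] :
    #{i | p (v (sort v i))} = #{i | p (v i)} :=
  card_equiv (sort v) (by simp)

lemma le_apply_sort_of_card_lt_le {a : α} {j : Fin n} (h : #{i | v i < a} ≤ j) :
    a ≤ v (sort v j) := by
  rw [← card_filter_apply_sort (· < a)] at h
  exact not_lt.1 fun hj =>
    ((lt_card_lt_iff_apply_lt_of_monotone (monotone_sort v)).2 hj).not_ge h

lemma apply_sort_le_of_add_card_gt_lt {a : α} {j : Fin n} (h : j + #{i | a < v i} < n) :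
    v (sort v j) ≤ a := by
  refine (lt_card_le_iff_apply_le_of_monotone (f := v ∘ sort v) (monotone_sort v)).1 ?_
  have hsplit := card_filter_add_card_filter_not (s := univ) (fun i => v i ≤ a)
  simp only [card_univ, Fintype.card_fin, not_le] at hsplit
  rw [Function.comp_def, card_filter_apply_sort (· ≤ a)]
  omega

end Tuple

lemma card_filter_le_of_injective {ι κ : Type*} [Fintype ι] [Fintype κ] {f : ι → κ}
    (hf : Function.Injective f) (p : κ → Prop) [DecidablePred p] (h : ∀ j, ¬ p (f j)) :
    #{k | p k} ≤ Fintype.card κ - Fintype.card ι := by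
  classical
  have hsub : ({k | p k} : Finset κ) ⊆ (univ.image f)ᶜ := by
    intro k hk
    simp only [mem_compl, mem_image, mem_univ, true_and, not_exists]
    rintro j rfl
    exact h j (mem_filter.1 hk).2
  simpa [card_compl, card_image_of_injective _ hf] using card_le_card hsub

def middleIndices (b : ℕ) : Finset (Fin (3 * b + 1)) :=
  {k | b ≤ k.val ∧ k.val ≤ 2 * b}

@[simp]
lemma mem_middleIndices {b : ℕ} {k : Fin (3 * b + 1)} :
    k ∈ middleIndices b ↔ b ≤ k.val ∧ k.val ≤ 2 * b := by
  simp [middleIndices]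

lemma middleIndices_eq_Icc (b : ℕ) : middleIndices b = Icc ⟨b, by omega⟩ ⟨2 * b, by omega⟩ := by
  ext k
  simp [Fin.le_def]

lemma card_middleIndices (b : ℕ) : #(middleIndices b) = b + 1 := by
  rw [middleIndices_eq_Icc, Fin.card_Icc]
  dsimp only
  omega

lemma trimmedMean_eq_expect (b : ℕ) (v : Fin (3 * b + 1) → ℝ) :
    trimmedMean b v = 𝔼 k ∈ middleIndices b, v (Tuple.sort v k) := by
  rw [trimmedMean, expect_eq_sum_div_card, card_middleIndices]
  push_cast
  rfl

theorem trimmedMean_mem_Icc {b : ℕ} {v : Fin (3 * b + 1) → ℝ} {m M : ℝ}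
    (hm : #{i | v i < m} ≤ b) (hM : #{i | M < v i} ≤ b) :
    trimmedMean b v ∈ Set.Icc m M := by
  have hne : (middleIndices b).Nonempty := by
    rw [← card_pos, card_middleIndices]
    omega
  rw [trimmedMean_eq_expect]
  constructor
  · refine le_expect hne fun k hk => Tuple.le_apply_sort_of_card_lt_le ?_
    have := mem_middleIndices.1 hk
    omega
  · refine expect_le hne fun k hk => Tuple.apply_sort_le_of_add_card_gt_lt ?_
    have := mem_middleIndices.1 hk
    omega

lemma mem_Icc_iInf_iSup {ι : Type*} [Finite ι] (y : ι → ℝ) (i : ι) :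
    y i ∈ Set.Icc (⨅ i, y i) (⨆ i, y i) :=
  ⟨ciInf_le (Finite.bddBelow_range y) i, le_ciSup (Finite.bddAbove_range y) i⟩

theorem trimmedMean_mem_Icc_iInf_iSup {b : ℕ} {v : Fin (3 * b + 1) → ℝ}
    {f : Fin (2 * b + 1) → Fin (3 * b + 1)} (hf : Function.Injective f) :
    trimmedMean b v ∈ Set.Icc (⨅ j, v (f j)) (⨆ j, v (f j)) := by
  have hout (p : ℝ → Prop) [DecidablePred p] (h : ∀ j, ¬ p (v (f j))) : #{i | p (v i)} ≤ b := by
    have := card_filter_le_of_injective hf (fun i => p (v i)) h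
    simp only [Fintype.card_fin] at this
    omega
  exact trimmedMean_mem_Icc
    (hout (· < _) fun j => not_lt.2 (mem_Icc_iInf_iSup (fun j => v (f j)) j).1)
    (hout (_ < ·) fun j => not_lt.2 (mem_Icc_iInf_iSup (fun j => v (f j)) j).2)

theorem iterated_trimmedMean_validity (b : ℕ) (x : ℕ → Fin (2 * b + 1) → ℝ)
    (hupd : ∀ t i, ∃ (v : Fin (3 * b + 1) → ℝ) (f : Fin (2 * b + 1) → Fin (3 * b + 1)),
      Function.Injective f ∧ (∀ j, v (f j) = x t j) ∧ x (t + 1) i = trimmedMean b v) :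
    (∀ t, (⨅ i, x t i) ≤ (⨅ i, x (t + 1) i) ∧ (⨆ i, x (t + 1) i) ≤ (⨆ i, x t i)) ∧
    (∀ t i, x t i ∈ Set.Icc (⨅ i, x 0 i) (⨆ i, x 0 i)) := by
  have step (t : ℕ) (i : Fin (2 * b + 1)) : x (t + 1) i ∈ Set.Icc (⨅ i, x t i) (⨆ i, x t i) := by
    obtain ⟨v, f, hf, hv, hx⟩ := hupd t i
    simpa only [hx, hv] using trimmedMean_mem_Icc_iInf_iSup (v := v) hf
  have nested (t : ℕ) : (⨅ i, x t i) ≤ (⨅ i, x (t + 1) i) ∧ (⨆ i, x (t + 1) i) ≤ (⨆ i, x t i) :=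
    ⟨le_ciInf fun i => (step t i).1, ciSup_le fun i => (step t i).2⟩
  have hull_antitone : Antitone fun t => Set.Icc (⨅ i, x t i) (⨆ i, x t i) :=
    antitone_nat_of_succ_le fun t => Set.Icc_subset_Icc (nested t).1 (nested t).2
  exact ⟨nested, fun t i => hull_antitone (Nat.zero_le t) (mem_Icc_iInf_iSup (x t) i)⟩
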